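/- Let m be a prime and define ι(i, m·s + r) = i + (s+1)·r (mod m) for 0 ≤ s ≤ m−2, 0 ≤ r ≤ m−1. If for two time indices t' = m·s' + r' and t'' = m·s'' + r'' (with t' < t'' in the stated ranges) we have ι(i,t') ≡ ι(i,t'') (mod m) and ι(i,t'+1') ≡ ι(i,t''+1) (mod m) — where the successor index adds 1 to r — then s' = s'' and r' = r''. In other words, the route defined by ι contains no repeated directed edge. -/
import Mathlib


/-- For `m` prime, the map `ι(i, m·s + r) = i + (s+1)·r (mod m)` defines a route
with no repeated directed edge: if two time indices (in the stated ranges) give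
the same edge endpoints mod `m`, the indices are equal. -/
theorem stmt_2 (m i : ℕ) (hm : m.Prime)
    (s' r' s'' r'' : ℕ)
    (hs' : s' ≤ m - 2) (hr' : r' ≤ m - 1)
    (hs'' : s'' ≤ m - 2) (hr'' : r'' ≤ m - 1)
    (h1 : i + (s' + 1) * r' ≡ i + (s'' + 1) * r'' [MOD m])
    (h2 : i + (s' + 1) * (r' + 1) ≡ i + (s'' + 1) * (r'' + 1) [MOD m]) :
    s' = s'' ∧ r' = r'' := by
  have hm2 : 2 ≤ m := hm.two_le
  haveI : Fact m.Prime := ⟨hm⟩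
  have hlt1 : s' + 1 < m := by omega
  have hlt2 : s'' + 1 < m := by omega
  have hltr1 : r' < m := by omega
  have hltr2 : r'' < m := by omega
  have H1 : ((i : ZMod m) + (s' + 1) * r' = (i : ZMod m) + (s'' + 1) * r'') := by
    have := (ZMod.natCast_eq_natCast_iff _ _ _).2 h1
    push_cast at this
    linear_combination this
  have H2 : ((i : ZMod m) + (s' + 1) * (r' + 1) = (i : ZMod m) + (s'' + 1) * (r'' + 1)) := by
    have := (ZMod.natCast_eq_natCast_iff _ _ _).2 h2
    push_cast at this
    linear_combination this
  have HS : ((s' : ZMod m) + 1 = (s'' : ZMod m) + 1) := by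
    linear_combination H2 - H1
  have hseq : s' = s'' := by
    have h : ((s' + 1 : ℕ) : ZMod m) = ((s'' + 1 : ℕ) : ZMod m) := by
      push_cast; linear_combination HS
    have := Nat.ModEq.eq_of_lt_of_lt ((ZMod.natCast_eq_natCast_iff _ _ _).1 h) hlt1 hlt2
    omega
  subst hseq
  refine ⟨rfl, ?_⟩
  have hne : ((s' : ZMod m) + 1) ≠ 0 := by
    intro h
    have h' : ((s' + 1 : ℕ) : ZMod m) = ((0 : ℕ) : ZMod m) := by
      push_cast; linear_combination h
    have := Nat.ModEq.eq_of_lt_of_lt ((ZMod.natCast_eq_natCast_iff _ _ _).1 h') hlt1 (by omega)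
    omega
  have HR : (r' : ZMod m) = (r'' : ZMod m) := by
    have := mul_left_cancel₀ hne (by linear_combination H1 : ((s' : ZMod m) + 1) * r' = ((s' : ZMod m) + 1) * r'')
    exact this
  have := (ZMod.natCast_eq_natCast_iff _ _ _).1 HR
  exact Nat.ModEq.eq_of_lt_of_lt this hltr1 hltr2
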